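/- arXiv:2409.11946 — 12 statements merged into one kernel-verified Lean document; each statement's English description precedes it below -/
import Mathlib

section
/- The powerdomain P⋆(S) with the order ⊑ is an ω-complete partial order: every ω-chain X : ℕ → Set (Option S) such that each X n lies in P⋆(S) and X n ⊑ X (n+1) for all n has a least upper bound L with respect to ⊑, and L lies in P⋆(S). -/
/-- The approximation order on `Set (Option S)`: `none` represents nontermination,
`∅` represents error. -/
def PLeq {S : Type*} (X Y : Set (Option S)) : Prop :=
  X = Y ∨ (none ∈ X ∧ (Y = ∅ ∨ X \ {none} ⊆ Y))

/-- The powerdomain `P⋆(S)`: subsets of `Option S` that contain `none` if infinite. -/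
def Pstar (S : Type*) : Set (Set (Option S)) :=
  {X | X.Infinite → none ∈ X}

theorem PLeq.trans' {S : Type*} {X Y Z : Set (Option S)} (h1 : PLeq X Y) (h2 : PLeq Y Z) :
    PLeq X Z := by
  rcases h1 with rfl | ⟨hnX, hY⟩
  · exact h2
  rcases h2 with rfl | ⟨hnY, hZ⟩
  · exact Or.inr ⟨hnX, hY⟩
  rcases hY with rfl | hXY
  · exact absurd hnY (by simp)
  rcases hZ with rfl | hYZ
  · exact Or.inr ⟨hnX, Or.inl rfl⟩
  · refine Or.inr ⟨hnX, Or.inr ?_⟩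
    intro a ha
    exact hYZ ⟨hXY ha, ha.2⟩

theorem pstar_omega_complete {S : Type*} (X : ℕ → Set (Option S))
    (hmem : ∀ n, X n ∈ Pstar S) (hchain : ∀ n, PLeq (X n) (X (n + 1))) :
    ∃ L : Set (Option S), L ∈ Pstar S ∧ (∀ n, PLeq (X n) L) ∧
      ∀ M : Set (Option S), (∀ n, PLeq (X n) M) → PLeq L M := by
  by_cases h : ∀ n, none ∈ X n
  · refine ⟨⋃ n, X n, ?_, ?_, ?_⟩
    · intro _; exact Set.mem_iUnion.2 ⟨0, h 0⟩
    · intro n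
      refine Or.inr ⟨h n, Or.inr ?_⟩
      intro a ha; exact Set.mem_iUnion.2 ⟨n, ha.1⟩
    · intro M hM
      by_cases hME : M = ∅
      · exact Or.inr ⟨Set.mem_iUnion.2 ⟨0, h 0⟩, Or.inl hME⟩
      · refine Or.inr ⟨Set.mem_iUnion.2 ⟨0, h 0⟩, Or.inr ?_⟩
        rintro a ⟨ha, hane⟩
        obtain ⟨n, han⟩ := Set.mem_iUnion.1 ha
        rcases hM n with he | ⟨_, hm⟩
        · exact he ▸ han
        rcases hm with rfl | hm
        · exact absurd rfl hME
        · exact hm ⟨han, hane⟩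
  · push_neg at h
    obtain ⟨n, hn⟩ := h
    have step : ∀ m d, PLeq (X m) (X (m + d)) := by
      intro m d
      induction d with
      | zero => exact Or.inl rfl
      | succ d ih => exact PLeq.trans' ih (hchain _)
    have le : ∀ m k, m ≤ k → PLeq (X m) (X k) := by
      intro m k hmk
      obtain ⟨d, rfl⟩ := Nat.exists_eq_add_of_le hmk
      exact step m d
    have const : ∀ k, n ≤ k → X k = X n := by
      intro k hk
      induction k, hk using Nat.le_induction with
      | base => rfl
      | succ k hk ih =>
        rcases hchain k with he | ⟨hnk, _⟩
        · rw [← he, ih]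
        · exact absurd (ih ▸ hnk) hn
    refine ⟨X n, hmem n, ?_, fun M hM => hM n⟩
    intro m
    rcases le_or_gt m n with hmn | hnm
    · exact le m n hmn
    · exact Or.inl (const m hnm.le)
end

section
/- If X : ℕ → Set (Option S) is an ω-chain with each X n in P⋆(S) and none ∈ X n for every n, then the union ⋃ n, X n lies in P⋆(S) and is a least upper bound of the chain with respect to ⊑. -/
theorem union_lub_of_bot_mem {S : Type*} (X : ℕ → Set (Option S))
    (hmem : ∀ n, X n ∈ Pstar S) (hchain : ∀ n, PLeq (X n) (X (n + 1)))
    (hbot : ∀ n, none ∈ X n) :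
    (⋃ n, X n) ∈ Pstar S ∧ (∀ n, PLeq (X n) (⋃ n, X n)) ∧
      ∀ M : Set (Option S), (∀ n, PLeq (X n) M) → PLeq (⋃ n, X n) M := by
  have hu : none ∈ ⋃ n, X n := Set.mem_iUnion.2 ⟨0, hbot 0⟩
  refine ⟨fun _ => hu, fun n => Or.inr ⟨hbot n, Or.inr ?_⟩, fun M hM => ?_⟩
  · exact fun x hx => Set.mem_iUnion.2 ⟨n, hx.1⟩
  · by_cases hME : M = ∅
    · exact Or.inr ⟨hu, Or.inl hME⟩
    · refine Or.inr ⟨hu, Or.inr fun x hx => ?_⟩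
      obtain ⟨n, hn⟩ := Set.mem_iUnion.1 hx.1
      rcases hM n with h | ⟨_, h | h⟩
      · exact h ▸ hn
      · exact absurd h hME
      · exact h ⟨hn, hx.2⟩
end

section
/- On nonempty sets, ⊑ coincides with the Egli–Milner order on the flat domain Option S: for all nonempty X, Y : Set (Option S), X ⊑ Y if and only if (every x ∈ X satisfies x = none or x ∈ Y) and (none ∈ X or Y ⊆ X). -/
theorem pleq_eq_egli_milner_on_nonempty {S : Type*} (X Y : Set (Option S))
    (hX : X.Nonempty) (hY : Y.Nonempty) :
    PLeq X Y ↔ (∀ x ∈ X, x = none ∨ x ∈ Y) ∧ (none ∈ X ∨ Y ⊆ X) := by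
  constructor
  · rintro (rfl | ⟨hn, (rfl | hsub)⟩)
    · exact ⟨fun x hx => Or.inr hx, Or.inr (fun y hy => hy)⟩
    · exact absurd rfl hY.ne_empty
    · exact ⟨fun x hx => by
        by_cases h : x = none
        · exact Or.inl h
        · exact Or.inr (hsub ⟨hx, h⟩), Or.inl hn⟩
  · rintro ⟨h1, h2⟩
    by_cases hn : none ∈ X
    · exact Or.inr ⟨hn, Or.inr fun x ⟨hx, hne⟩ => (h1 x hx).resolve_left hne⟩
    · left
      apply Set.Subset.antisymm
      · intro x hx
        rcases h1 x hx with rfl | h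
        · exact absurd hx hn
        · exact h
      · exact h2.resolve_left hn
end

section
/- Monadic bind is well defined on the powerdomain: if X ∈ P⋆(S) and f : S → Set (Option T) satisfies f a ∈ P⋆(T) for every a : S, then lift f X ∈ P⋆(T), i.e., if lift f X is infinite then none ∈ lift f X. -/
open Classical in
/-- Monadic bind on the powerdomain: `∅` if some value in `X` is mapped to the error
value `∅`; otherwise the union of the results, keeping `none` if `none ∈ X`. -/
noncomputable def lift {S T : Type*} (f : S → Set (Option T)) (X : Set (Option S)) :
    Set (Option T) :=
  if ∃ a : S, some a ∈ X ∧ f a = ∅ then ∅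
  else {x | x = none ∧ none ∈ X} ∪ ⋃ (a : S) (_ : some a ∈ X), f a

/-! If `none ∈ X` it survives in `lift f X`; otherwise `X` is finite, so `lift f X` is a
finite union of members of `P⋆(T)`, and `P⋆(T)` is closed under finite unions. -/

namespace Pstar

variable {S : Type*} {X Y : Set (Option S)}

theorem of_finite (h : X.Finite) : X ∈ Pstar S := fun hinf => absurd h hinf

theorem of_none_mem (h : none ∈ X) : X ∈ Pstar S := fun _ => h

theorem finite_of_none_notMem (hX : X ∈ Pstar S) (h : none ∉ X) : X.Finite :=
  Set.not_infinite.mp (mt hX h)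

theorem union (hX : X ∈ Pstar S) (hY : Y ∈ Pstar S) : X ∪ Y ∈ Pstar S := by
  intro hinf
  rcases Set.infinite_union.mp hinf with hXinf | hYinf
  · exact Or.inl (hX hXinf)
  · exact Or.inr (hY hYinf)

theorem biUnion {ι : Type*} {I : Set ι} {F : ι → Set (Option S)} (hI : I.Finite)
    (hF : ∀ i ∈ I, F i ∈ Pstar S) : ⋃ i ∈ I, F i ∈ Pstar S := by
  intro hinf
  obtain ⟨i, hi, hFinf⟩ : ∃ i ∈ I, (F i).Infinite := by
    by_contra! hfin
    exact hinf (hI.biUnion hfin)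
  exact Set.mem_biUnion hi (hF i hi hFinf)

end Pstar

theorem lift_of_exists_eq_empty {S T : Type*} {f : S → Set (Option T)} {X : Set (Option S)}
    (h : ∃ a : S, some a ∈ X ∧ f a = ∅) : lift f X = ∅ := by
  classical
  exact if_pos h

theorem lift_of_forall_ne_empty {S T : Type*} {f : S → Set (Option T)} {X : Set (Option S)}
    (h : ¬∃ a : S, some a ∈ X ∧ f a = ∅) :
    lift f X = {x | x = none ∧ none ∈ X} ∪ ⋃ (a : S) (_ : some a ∈ X), f a := by
  classical
  exact if_neg h

theorem lift_mem_pstar {S T : Type*} (f : S → Set (Option T)) (X : Set (Option S))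
    (hX : X ∈ Pstar S) (hf : ∀ a : S, f a ∈ Pstar T) :
    lift f X ∈ Pstar T := by
  by_cases herr : ∃ a : S, some a ∈ X ∧ f a = ∅
  · rw [lift_of_exists_eq_empty herr]
    exact Pstar.of_finite Set.finite_empty
  rw [lift_of_forall_ne_empty herr]
  by_cases hn : none ∈ X
  · exact Pstar.of_none_mem (Or.inl ⟨rfl, hn⟩)
  have hvalues : (some ⁻¹' X : Set S).Finite :=
    (Pstar.finite_of_none_notMem hX hn).preimage (Option.some_injective S).injOn
  refine Pstar.union (Pstar.of_finite ?_) (Pstar.biUnion hvalues fun a _ => hf a)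
  exact (Set.finite_singleton none).subset fun x hx => hx.1
end

section
/- The monad associativity law holds for the powerdomain bind: for all X : Set (Option S), f : S → Set (Option T), and g : T → Set (Option U), lift g (lift f X) = lift (fun a => lift g (f a)) X. -/
section
variable {S T : Type*} {f : S → Set (Option T)} {X : Set (Option S)} {x : Option T}

theorem mem_lift_iff :
    x ∈ lift f X ↔ (∀ a, some a ∈ X → (f a).Nonempty) ∧
      ((x = none ∧ none ∈ X) ∨ ∃ a, some a ∈ X ∧ x ∈ f a) := by
  unfold lift
  split_ifs with h
  · obtain ⟨a, ha, hfa⟩ := h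
    simp only [Set.mem_empty_iff_false, false_iff, not_and]
    exact fun hf => absurd hfa (hf a ha).ne_empty
  · simp_all [Set.nonempty_iff_ne_empty]

theorem lift_nonempty_iff :
    (lift f X).Nonempty ↔ X.Nonempty ∧ ∀ a, some a ∈ X → (f a).Nonempty := by
  simp only [Set.Nonempty, mem_lift_iff]
  constructor
  · rintro ⟨x, hf, ⟨-, hn⟩ | ⟨a, ha, -⟩⟩
    · exact ⟨⟨none, hn⟩, hf⟩
    · exact ⟨⟨some a, ha⟩, hf⟩
  · rintro ⟨⟨(_ | a), hx⟩, hf⟩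
    · exact ⟨none, hf, .inl ⟨rfl, hx⟩⟩
    · obtain ⟨y, hy⟩ := hf a hx
      exact ⟨y, hf, .inr ⟨a, hx, hy⟩⟩

end

theorem lift_assoc {S T U : Type*} (X : Set (Option S)) (f : S → Set (Option T))
    (g : T → Set (Option U)) :
    lift g (lift f X) = lift (fun a => lift g (f a)) X := by
  ext x
  -- Both sides now say: no `a` with `some a ∈ X` errs under `f`, no `b` reachable through such an
  -- `a` errs under `g`, and `x` comes from `none ∈ X`, from `none ∈ f a`, or from some `g b`.
  simp only [mem_lift_iff, lift_nonempty_iff]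
  grind
end

section
/- Monadic bind is monotone in its set argument: for every f : S → Set (Option T) and all X, X' : Set (Option S), if X ⊑ X' then lift f X ⊑ lift f X'. -/
theorem lift_monotone {S T : Type*} (f : S → Set (Option T)) (X X' : Set (Option S))
    (h : PLeq X X') : PLeq (lift f X) (lift f X') := by
  rcases h with rfl | ⟨hnX, hcase⟩
  · exact Or.inl rfl
  rcases hcase with rfl | hsub
  · -- X' = ∅
    have hX' : lift f (∅ : Set (Option S)) = ∅ := by
      simp [lift]
    rw [hX']
    unfold lift
    by_cases herr : ∃ a : S, some a ∈ X ∧ f a = ∅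
    · rw [if_pos herr]; exact Or.inl rfl
    · rw [if_neg herr]
      exact Or.inr ⟨Or.inl ⟨rfl, hnX⟩, Or.inl rfl⟩
  · -- X \ {none} ⊆ X'
    have hsome : ∀ a : S, some a ∈ X → some a ∈ X' := fun a ha =>
      hsub ⟨ha, by simp⟩
    by_cases herr : ∃ a : S, some a ∈ X ∧ f a = ∅
    · obtain ⟨a, ha, hfa⟩ := herr
      have herr' : ∃ a : S, some a ∈ X' ∧ f a = ∅ := ⟨a, hsome a ha, hfa⟩
      left
      have herr : ∃ a : S, some a ∈ X ∧ f a = ∅ := ⟨a, ha, hfa⟩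
      simp [lift, herr, herr']
    · by_cases herr' : ∃ a : S, some a ∈ X' ∧ f a = ∅
      · have hX' : lift f X' = ∅ := by simp [lift, herr']
        rw [hX']
        refine Or.inr ⟨?_, Or.inl rfl⟩
        unfold lift
        rw [if_neg herr]
        exact Or.inl ⟨rfl, hnX⟩
      · refine Or.inr ⟨?_, Or.inr ?_⟩
        · unfold lift
          rw [if_neg herr]
          exact Or.inl ⟨rfl, hnX⟩
        · intro x hx
          obtain ⟨hx1, hx2⟩ := hx
          unfold lift at hx1 ⊢
          rw [if_neg herr] at hx1
          rw [if_neg herr']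
          rcases hx1 with ⟨rfl, -⟩ | hx1
          · exact absurd rfl hx2
          · right
            simp only [Set.mem_iUnion] at hx1 ⊢
            obtain ⟨a, ha, hxa⟩ := hx1
            exact ⟨a, hsome a ha, hxa⟩
end

section
/- Monadic bind is ω-continuous in its set argument: let f : S → Set (Option T), let X : ℕ → Set (Option S) be an ω-chain with each X n ∈ P⋆(S), and let L be a least upper bound of the chain (X n) with respect to ⊑. Then lift f L is a least upper bound of the sequence (lift f (X n)) with respect to ⊑. -/
lemma lift_of_err {S T : Type*} (f : S → Set (Option T)) {X : Set (Option S)}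
    (h : ∃ a : S, some a ∈ X ∧ f a = ∅) : lift f X = ∅ := by
  unfold lift; rw [if_pos h]

lemma lift_of_noerr {S T : Type*} (f : S → Set (Option T)) {X : Set (Option S)}
    (h : ¬ ∃ a : S, some a ∈ X ∧ f a = ∅) :
    lift f X = {x | x = none ∧ none ∈ X} ∪ ⋃ (a : S) (_ : some a ∈ X), f a := by
  unfold lift; rw [if_neg h]

lemma none_mem_lift {S T : Type*} (f : S → Set (Option T)) {X : Set (Option S)}
    (h : ¬ ∃ a : S, some a ∈ X ∧ f a = ∅) (hn : none ∈ X) : none ∈ lift f X := by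
  rw [lift_of_noerr f h]; exact Or.inl ⟨rfl, hn⟩

lemma lift_mono {S T : Type*} (f : S → Set (Option T)) {X Y : Set (Option S)}
    (h : PLeq X Y) : PLeq (lift f X) (lift f Y) := by
  rcases h with rfl | ⟨hnX, hY⟩
  · exact Or.inl rfl
  by_cases hEX : ∃ a : S, some a ∈ X ∧ f a = ∅
  · have hX0 : lift f X = ∅ := lift_of_err f hEX
    have hY0 : lift f Y = ∅ := by
      rcases hY with rfl | hsub
      · rw [lift_of_noerr f (by simp)]; simp
      · obtain ⟨a, haX, hfa⟩ := hEX
        exact lift_of_err f ⟨a, hsub ⟨haX, by simp⟩, hfa⟩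
    rw [hX0, hY0]; exact Or.inl rfl
  · rcases hY with rfl | hsub
    · have : lift f (∅ : Set (Option S)) = ∅ := by
        rw [lift_of_noerr f (by simp)]; simp
      exact Or.inr ⟨none_mem_lift f hEX hnX, Or.inl this⟩
    · by_cases hEY : ∃ a : S, some a ∈ Y ∧ f a = ∅
      · exact Or.inr ⟨none_mem_lift f hEX hnX, Or.inl (lift_of_err f hEY)⟩
      · refine Or.inr ⟨none_mem_lift f hEX hnX, Or.inr ?_⟩
        rintro x ⟨hx, hxne⟩
        rw [lift_of_noerr f hEX] at hx
        rw [lift_of_noerr f hEY]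
        rcases hx with ⟨rfl, _⟩ | hx
        · exact absurd rfl hxne
        · obtain ⟨a, ha, hxa⟩ := Set.mem_iUnion₂.1 hx
          exact Or.inr (Set.mem_iUnion₂.2 ⟨a, hsub ⟨ha, by simp⟩, hxa⟩)

theorem lift_continuous_set {S T : Type*} (f : S → Set (Option T))
    (X : ℕ → Set (Option S)) (hmem : ∀ n, X n ∈ Pstar S)
    (hchain : ∀ n, PLeq (X n) (X (n + 1)))
    (L : Set (Option S)) (hub : ∀ n, PLeq (X n) L)
    (hlub : ∀ M : Set (Option S), (∀ n, PLeq (X n) M) → PLeq L M) :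
    (∀ n, PLeq (lift f (X n)) (lift f L)) ∧
      ∀ M : Set (Option T), (∀ n, PLeq (lift f (X n)) M) → PLeq (lift f L) M := by
  refine ⟨fun n => lift_mono f (hub n), ?_⟩
  intro M hM
  by_cases hall : ∀ n, none ∈ X n
  · -- L = ⋃ n, X n (essentially); derive key facts
    set U : Set (Option S) := ⋃ n, X n with hU
    have hUub : ∀ n, PLeq (X n) U :=
      fun n => Or.inr ⟨hall n, Or.inr (fun x hx => Set.mem_iUnion.2 ⟨n, hx.1⟩)⟩
    have hLU := hlub U hUub
    have hnU : none ∈ U := Set.mem_iUnion.2 ⟨0, hall 0⟩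
    have hLne : L ≠ ∅ := by
      intro h
      rcases hLU with h' | ⟨h', _⟩
      · rw [h] at h'; rw [← h'] at hnU; exact hnU
      · rw [h] at h'; exact h'
    have hnL : none ∈ L := by
      rcases hLU with h' | ⟨h', _⟩
      · rw [h']; exact hnU
      · exact h'
    have hXsubL : ∀ n, ∀ a : S, some a ∈ X n → some a ∈ L := by
      intro n a ha
      rcases hub n with h' | ⟨_, h'⟩
      · rw [← h']; exact ha
      · rcases h' with h' | h'
        · exact absurd h' hLne
        · exact h' ⟨ha, by simp⟩
    have hLsub : ∀ a : S, some a ∈ L → ∃ n, some a ∈ X n := by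
      intro a ha
      rcases hLU with h' | ⟨_, h'⟩
      · rw [h'] at ha; exact Set.mem_iUnion.1 ha
      · rcases h' with h' | h'
        · rw [h'] at hnU; exact absurd hnU (Set.notMem_empty _)
        · exact Set.mem_iUnion.1 (h' ⟨ha, by simp⟩)
    by_cases hEL : ∃ a : S, some a ∈ L ∧ f a = ∅
    · obtain ⟨a, haL, hfa⟩ := hEL
      obtain ⟨n, han⟩ := hLsub a haL
      have hXn0 : lift f (X n) = ∅ := lift_of_err f ⟨a, han, hfa⟩
      have hM0 : M = ∅ := by
        have := hM n; rw [hXn0] at this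
        rcases this with h' | ⟨h', _⟩
        · exact h'.symm
        · exact absurd h' (Set.notMem_empty _)
      rw [hM0, lift_of_err f ⟨a, haL, hfa⟩]
      exact Or.inl rfl
    · have hnlL : none ∈ lift f L := none_mem_lift f hEL hnL
      by_cases hM0 : M = ∅
      · exact Or.inr ⟨hnlL, Or.inl hM0⟩
      · refine Or.inr ⟨hnlL, Or.inr ?_⟩
        rintro x ⟨hx, hxne⟩
        rw [lift_of_noerr f hEL] at hx
        rcases hx with ⟨rfl, _⟩ | hx
        · exact absurd rfl hxne
        obtain ⟨a, haL, hxa⟩ := Set.mem_iUnion₂.1 hx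
        obtain ⟨n, han⟩ := hLsub a haL
        have hEn : ¬ ∃ b : S, some b ∈ X n ∧ f b = ∅ := by
          rintro ⟨b, hb, hfb⟩
          exact hEL ⟨b, hXsubL n b hb, hfb⟩
        have hxXn : x ∈ lift f (X n) := by
          rw [lift_of_noerr f hEn]
          exact Or.inr (Set.mem_iUnion₂.2 ⟨a, han, hxa⟩)
        rcases hM n with h' | ⟨_, h'⟩
        · rw [← h']; exact hxXn
        · rcases h' with h' | h'
          · exact absurd h' hM0
          · exact h' ⟨hxXn, by simpa using hxne⟩
  · push_neg at hall
    obtain ⟨n, hn⟩ := hall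
    rcases hub n with h' | ⟨h', _⟩
    · rw [← h']; exact hM n
    · exact absurd h' hn
end

section
/- Monadic bind is monotone in its function argument: for all f, g : S → Set (Option T), if f a ⊑ g a for every a : S, then lift f X ⊑ lift g X for every X : Set (Option S). -/
theorem lift_monotone_fun {S T : Type*} (f g : S → Set (Option T))
    (h : ∀ a : S, PLeq (f a) (g a)) (X : Set (Option S)) :
    PLeq (lift f X) (lift g X) := by
  classical
  by_cases hg : ∃ a : S, some a ∈ X ∧ g a = ∅
  · -- lift g X = ∅
    have hgX : lift g X = ∅ := by simp [lift, hg]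
    obtain ⟨a, haX, hga⟩ := hg
    rcases h a with heq | ⟨hnone, _⟩
    · -- f a = ∅, so lift f X = ∅
      have : lift f X = ∅ := by
        have : ∃ a : S, some a ∈ X ∧ f a = ∅ := ⟨a, haX, heq.trans hga⟩
        simp [lift, this]
      exact Or.inl (this.trans hgX.symm)
    · by_cases hf : ∃ a : S, some a ∈ X ∧ f a = ∅
      · have : lift f X = ∅ := by simp [lift, hf]
        exact Or.inl (this.trans hgX.symm)
      · have hfX : lift f X =
            {x | x = none ∧ none ∈ X} ∪ ⋃ (a : S) (_ : some a ∈ X), f a := by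
          simp [lift, hf]
        refine Or.inr ⟨?_, Or.inl hgX⟩
        rw [hfX]
        exact Or.inr (Set.mem_iUnion.2 ⟨a, Set.mem_iUnion.2 ⟨haX, hnone⟩⟩)
  · have hf : ¬ ∃ a : S, some a ∈ X ∧ f a = ∅ := by
      rintro ⟨a, haX, hfa⟩
      rcases h a with heq | ⟨hnone, _⟩
      · exact hg ⟨a, haX, heq ▸ hfa⟩
      · rw [hfa] at hnone; exact hnone
    have hfX : lift f X =
        {x | x = none ∧ none ∈ X} ∪ ⋃ (a : S) (_ : some a ∈ X), f a := by
      simp [lift, hf]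
    have hgX : lift g X =
        {x | x = none ∧ none ∈ X} ∪ ⋃ (a : S) (_ : some a ∈ X), g a := by
      simp [lift, hg]
    by_cases hall : ∀ a : S, some a ∈ X → f a = g a
    · left
      rw [hfX, hgX]
      congr 1
      ext x
      simp only [Set.mem_iUnion]
      constructor
      · rintro ⟨a, ha, hx⟩; exact ⟨a, ha, (hall a ha) ▸ hx⟩
      · rintro ⟨a, ha, hx⟩; exact ⟨a, ha, (hall a ha) ▸ hx⟩
    · push_neg at hall
      obtain ⟨a₀, ha₀X, hne⟩ := hall
      rcases h a₀ with heq | ⟨hnone, hrest⟩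
      · exact absurd heq hne
      · refine Or.inr ⟨?_, Or.inr ?_⟩
        · rw [hfX]
          exact Or.inr (Set.mem_iUnion.2 ⟨a₀, Set.mem_iUnion.2 ⟨ha₀X, hnone⟩⟩)
        · rintro x ⟨hx, hxne⟩
          simp only [Set.mem_singleton_iff] at hxne
          rw [hfX] at hx
          rw [hgX]
          rcases hx with ⟨hx0, hxX⟩ | hx
          · exact absurd hx0 hxne
          · obtain ⟨a, ha, hxa⟩ := by
              simpa only [Set.mem_iUnion] using hx
            rcases h a with heq | ⟨_, hr⟩
            · exact Or.inr (Set.mem_iUnion.2 ⟨a, Set.mem_iUnion.2 ⟨ha, heq ▸ hxa⟩⟩)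
            · rcases hr with hga | hsub
              · exact absurd hga (fun hg0 => hg ⟨a, ha, hg0⟩)
              · exact Or.inr (Set.mem_iUnion.2 ⟨a, Set.mem_iUnion.2
                  ⟨ha, hsub ⟨hxa, hxne⟩⟩⟩)
end

section
/- Monadic bind is ω-continuous in its function argument: let g : ℕ → S → Set (Option T) be a sequence with g n a ∈ P⋆(T) and g n a ⊑ g (n+1) a for all n and a, let G : S → Set (Option T) be a pointwise least upper bound (i.e., for each a : S, G a is a least upper bound of the chain (g n a) with respect to ⊑), and let X ∈ P⋆(S). Then lift G X is a least upper bound of the sequence (lift (g n) X) with respect to ⊑. -/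
/-- Once `none` leaves a chain, the chain is constant from then on. -/
theorem chain_const {T : Type*} {c : ℕ → Set (Option T)}
    (h : ∀ n, PLeq (c n) (c (n + 1))) {N : ℕ} (hN : none ∉ c N) :
    ∀ m, N ≤ m → c m = c N := by
  intro m hm
  induction hm with
  | refl => rfl
  | @step m _ ih =>
    rcases h m with heq | ⟨hn, _⟩
    · rw [← heq]; exact ih
    · exact absurd (ih ▸ hn) hN

/-- If some element of the chain misses `none`, the lub equals that element. -/
theorem lub_of_not_none {T : Type*} {c : ℕ → Set (Option T)} {L : Set (Option T)}
    (hub : ∀ n, PLeq (c n) L) {N : ℕ} (hN : none ∉ c N) : L = c N := by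
  rcases hub N with heq | ⟨hn, _⟩
  · exact heq.symm
  · exact absurd hn hN

/-- If every element of the chain contains `none`, the lub is the union. -/
theorem lub_of_all_none {T : Type*} {c : ℕ → Set (Option T)} {L : Set (Option T)}
    (hub : ∀ n, PLeq (c n) L)
    (hlub : ∀ M, (∀ n, PLeq (c n) M) → PLeq L M)
    (hall : ∀ n, none ∈ c n) : L = ⋃ n, c n := by
  have hU : none ∈ ⋃ n, c n := Set.mem_iUnion.2 ⟨0, hall 0⟩
  have hLU : PLeq L (⋃ n, c n) :=
    hlub _ (fun n => Or.inr ⟨hall n, Or.inr (fun x hx => Set.mem_iUnion.2 ⟨n, hx.1⟩)⟩)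
  have hLe : PLeq L ∅ := hlub _ (fun n => Or.inr ⟨hall n, Or.inl rfl⟩)
  have hLne : L ≠ ∅ := by
    rintro rfl
    rcases hLU with heq | ⟨hn, _⟩
    · rw [← heq] at hU; exact hU
    · exact hn
  have hLnone : none ∈ L := by
    rcases hLe with h | ⟨hn, _⟩
    · exact absurd h hLne
    · exact hn
  apply Set.Subset.antisymm
  · rcases hLU with heq | ⟨_, h⟩
    · exact heq.subset
    rcases h with h | h
    · exfalso; rw [h] at hU; exact hU
    · intro x hx
      by_cases hxn : x = none
      · rw [hxn]; exact hU
      · exact h ⟨hx, by simp [hxn]⟩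
  · intro x hx
    rcases Set.mem_iUnion.1 hx with ⟨n, hxn⟩
    by_cases hx0 : x = none
    · rw [hx0]; exact hLnone
    rcases hub n with heq | ⟨_, h⟩
    · exact heq ▸ hxn
    rcases h with h | h
    · exact absurd h hLne
    · exact h ⟨hxn, by simp [hx0]⟩

theorem lift_continuous_fun {S T : Type*} (g : ℕ → S → Set (Option T))
    (hmem : ∀ n a, g n a ∈ Pstar T) (hchain : ∀ n a, PLeq (g n a) (g (n + 1) a))
    (G : S → Set (Option T))
    (hub : ∀ a n, PLeq (g n a) (G a))
    (hlub : ∀ (a : S) (M : Set (Option T)), (∀ n, PLeq (g n a) M) → PLeq (G a) M)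
    (X : Set (Option S)) (hX : X ∈ Pstar S) :
    (∀ n, PLeq (lift (g n) X) (lift G X)) ∧
      ∀ M : Set (Option T), (∀ n, PLeq (lift (g n) X) M) → PLeq (lift G X) M := by
  classical
  have hEa : ∀ (a : S) (N : ℕ), none ∉ g N a → ∀ m, N ≤ m → g m a = g N a :=
    fun a N hN => chain_const (fun n => hchain n a) hN
  have hGE : ∀ (a : S) (N : ℕ), none ∉ g N a → G a = g N a :=
    fun a N hN => lub_of_not_none (hub a) hN
  have hGC : ∀ a : S, (∀ n, none ∈ g n a) → G a = ⋃ n, g n a :=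
    fun a h => lub_of_all_none (hub a) (hlub a) h
  by_cases herrG : ∃ a : S, some a ∈ X ∧ G a = ∅
  · -- error case: lift G X = ∅
    have hlG : lift G X = ∅ := by rw [lift, if_pos herrG]
    obtain ⟨a, haX, haG⟩ := herrG
    have hex : ∃ N, g N a = ∅ := by
      by_cases hall : ∀ n, none ∈ g n a
      · exfalso
        have h0 : none ∈ ⋃ n, g n a := Set.mem_iUnion.2 ⟨0, hall 0⟩
        rw [← hGC a hall, haG] at h0
        exact h0
      · push_neg at hall
        obtain ⟨N, hN⟩ := hall
        exact ⟨N, by rw [← hGE a N hN, haG]⟩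
    obtain ⟨N, hN⟩ := hex
    constructor
    · intro n
      rw [hlG]
      by_cases herr : ∃ b : S, some b ∈ X ∧ g n b = ∅
      · rw [lift, if_pos herr]
        exact Or.inl rfl
      · have hgne : g n a ≠ ∅ := fun h => herr ⟨a, haX, h⟩
        have hnone : none ∈ g n a := by
          rcases hub a n with heq | ⟨hn, _⟩
          · exact absurd (heq.trans haG) hgne
          · exact hn
        have hmemn : none ∈ lift (g n) X := by
          rw [lift, if_neg herr]
          exact Or.inr (Set.mem_iUnion.2 ⟨a, Set.mem_iUnion.2 ⟨haX, hnone⟩⟩)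
        exact Or.inr ⟨hmemn, Or.inl rfl⟩
    · intro M hM
      have h1 : lift (g N) X = ∅ := by rw [lift, if_pos ⟨a, haX, hN⟩]
      have h2 := hM N
      rw [h1] at h2
      rcases h2 with rfl | ⟨hn, _⟩
      · exact Or.inl hlG
      · exact absurd hn (by simp)
  · -- no error in the limit
    push_neg at herrG
    have herrG : ∀ a : S, some a ∈ X → G a ≠ ∅ := fun a ha => (herrG a ha).ne_empty
    have herrg : ∀ (n : ℕ) (a : S), some a ∈ X → g n a ≠ ∅ := by
      intro n a ha h
      have hna : none ∉ g n a := by rw [h]; simp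
      exact herrG a ha (by rw [hGE a n hna, h])
    have hlg : ∀ n, lift (g n) X =
        {x | x = none ∧ none ∈ X} ∪ ⋃ (a : S) (_ : some a ∈ X), g n a := by
      intro n
      rw [lift, if_neg]
      rintro ⟨a, ha, he⟩
      exact herrg n a ha he
    have hlGX : lift G X =
        {x | x = none ∧ none ∈ X} ∪ ⋃ (a : S) (_ : some a ∈ X), G a := by
      rw [lift, if_neg]
      rintro ⟨a, ha, he⟩
      exact herrG a ha he
    have hdiff : ∀ n, lift (g n) X \ {none} ⊆ lift G X := by
      intro n x hx
      obtain ⟨hxm, hxn⟩ := hx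
      have hxn' : x ≠ none := by simpa using hxn
      rw [hlg n] at hxm
      rw [hlGX]
      rcases hxm with hx1 | hx2
      · exact absurd hx1.1 hxn'
      · rcases Set.mem_iUnion.1 hx2 with ⟨a, ha⟩
        rcases Set.mem_iUnion.1 ha with ⟨haX, hxa⟩
        refine Or.inr (Set.mem_iUnion.2 ⟨a, Set.mem_iUnion.2 ⟨haX, ?_⟩⟩)
        rcases hub a n with heq | ⟨_, h⟩
        · exact heq ▸ hxa
        rcases h with h | h
        · exact absurd h (herrG a haX)
        · exact h ⟨hxa, hxn⟩
    have hupper : ∀ n, PLeq (lift (g n) X) (lift G X) := by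
      intro n
      by_cases hn : none ∈ lift (g n) X
      · exact Or.inr ⟨hn, Or.inr (hdiff n)⟩
      · left
        rw [hlg n, hlGX]
        congr 1
        apply Set.iUnion_congr
        intro a
        by_cases haX : some a ∈ X
        · have hna : none ∉ g n a := by
            intro h
            exact hn (by
              rw [hlg n]
              exact Or.inr (Set.mem_iUnion.2 ⟨a, Set.mem_iUnion.2 ⟨haX, h⟩⟩))
          rw [hGE a n hna]
        · simp [haX]
    refine ⟨hupper, ?_⟩
    intro M hM
    by_cases hii : ∀ n, none ∈ lift (g n) X
    · -- every approximant contains none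
      have hLnone : none ∈ lift G X := by
        by_cases hXn : none ∈ X
        · rw [hlGX]; exact Or.inl ⟨rfl, hXn⟩
        · have hXfin : X.Finite := by
            by_contra hinf
            exact hXn (hX hinf)
          have hA : ∃ a : S, some a ∈ X ∧ ∀ n, none ∈ g n a := by
            by_contra hc
            push_neg at hc
            have hAfin : {a : S | some a ∈ X}.Finite :=
              Set.Finite.preimage (Option.some_injective S).injOn hXfin
            set F : S → ℕ := fun a => if h : ∃ n, none ∉ g n a then h.choose else 0 with hF
            obtain ⟨n0, hn0⟩ := (hAfin.image F).bddAbove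
            have hnone : none ∉ lift (g n0) X := by
              rw [hlg n0]
              rintro (⟨_, h⟩ | h)
              · exact hXn h
              · rcases Set.mem_iUnion.1 h with ⟨a, ha⟩
                rcases Set.mem_iUnion.1 ha with ⟨haX, hna⟩
                have hexa : ∃ n, none ∉ g n a := hc a haX
                have hFa : none ∉ g (F a) a := by
                  simp only [hF, dif_pos hexa]
                  exact hexa.choose_spec
                have hle : F a ≤ n0 := hn0 (Set.mem_image_of_mem F haX)
                have hgeq := hEa a (F a) hFa n0 hle
                rw [hgeq] at hna
                exact hFa hna
            exact hnone (hii n0)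
          obtain ⟨a, haX, hall⟩ := hA
          rw [hlGX]
          refine Or.inr (Set.mem_iUnion.2 ⟨a, Set.mem_iUnion.2 ⟨haX, ?_⟩⟩)
          rw [hGC a hall]
          exact Set.mem_iUnion.2 ⟨0, hall 0⟩
      by_cases hMe : M = ∅
      · exact Or.inr ⟨hLnone, Or.inl hMe⟩
      refine Or.inr ⟨hLnone, Or.inr ?_⟩
      intro x hx
      obtain ⟨hxL, hxn⟩ := hx
      have hxn' : x ≠ none := by simpa using hxn
      rw [hlGX] at hxL
      rcases hxL with h | h
      · exact absurd h.1 hxn'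
      rcases Set.mem_iUnion.1 h with ⟨a, ha⟩
      rcases Set.mem_iUnion.1 ha with ⟨haX, hxa⟩
      have hxU : x ∈ ⋃ n, g n a := by
        by_cases hall : ∀ n, none ∈ g n a
        · rw [← hGC a hall]; exact hxa
        · push_neg at hall
          obtain ⟨N, hN⟩ := hall
          exact Set.mem_iUnion.2 ⟨N, (hGE a N hN) ▸ hxa⟩
      rcases Set.mem_iUnion.1 hxU with ⟨n, hxgn⟩
      have hxLn : x ∈ lift (g n) X := by
        rw [hlg n]
        exact Or.inr (Set.mem_iUnion.2 ⟨a, Set.mem_iUnion.2 ⟨haX, hxgn⟩⟩)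
      rcases hM n with heq | ⟨_, h⟩
      · exact heq ▸ hxLn
      rcases h with h | h
      · exact absurd h hMe
      · exact h ⟨hxLn, hxn⟩
    · -- some approximant misses none: the chain is eventually constant
      push_neg at hii
      obtain ⟨n0, hn0⟩ := hii
      have hEq : lift G X = lift (g n0) X := by
        rw [hlg n0, hlGX]
        congr 1
        apply Set.iUnion_congr
        intro a
        by_cases haX : some a ∈ X
        · have hna : none ∉ g n0 a := fun h =>
            hn0 (by
              rw [hlg n0]
              exact Or.inr (Set.mem_iUnion.2 ⟨a, Set.mem_iUnion.2 ⟨haX, h⟩⟩))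
          rw [hGE a n0 hna]
        · simp [haX]
      rw [hEq]
      exact hM n0
end

section
/- The conditional map C X Y Z := lift (fun b => if b then Y else Z) X on the powerdomain satisfies, for all Y, Z : Set (Option S): (i) if some true ∉ X then C X Y Z = C X Y' Z for all Y' (C is constant in Y); (ii) C {some true} Y Z = Y; (iii) C {some true, some false} Y Z = Y ⊎ Z; (iv) C {some true, none} Y Z = ∅ if Y = ∅ and Y ∪ {none} otherwise; (v) C {some true, some false, none} Y Z = ∅ if Y ⊎ Z = ∅ and (Y ⊎ Z) ∪ {none} otherwise. -/
open Classical in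
/-- Strict union: the error value `∅` is absorbing. -/
noncomputable def sunion {S : Type*} (X Y : Set (Option S)) : Set (Option S) :=
  if X = ∅ ∨ Y = ∅ then ∅ else X ∪ Y

/-- The conditional map on the powerdomain. -/
noncomputable def condMap {S : Type*} (X : Set (Option Bool)) (Y Z : Set (Option S)) :
    Set (Option S) :=
  lift (fun b => if b then Y else Z) X

open Classical in
lemma condMap_eq {S : Type*} (X : Set (Option Bool)) (Y Z : Set (Option S)) :
    condMap X Y Z = if (some true ∈ X ∧ Y = ∅) ∨ (some false ∈ X ∧ Z = ∅) then ∅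
      else {x | x = none ∧ none ∈ X} ∪
        ((if some true ∈ X then Y else ∅) ∪ (if some false ∈ X then Z else ∅)) := by
  unfold condMap lift
  have h1 : (∃ a : Bool, some a ∈ X ∧ (if a then Y else Z) = ∅) ↔
      (some true ∈ X ∧ Y = ∅) ∨ (some false ∈ X ∧ Z = ∅) := by
    constructor
    · rintro ⟨a, ha, he⟩; cases a <;> simp_all
    · rintro (⟨h, he⟩ | ⟨h, he⟩)
      · exact ⟨true, h, by simp [he]⟩
      · exact ⟨false, h, by simp [he]⟩
  have h2 : (⋃ (a : Bool) (_ : some a ∈ X), (if a then Y else Z)) =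
      (if some true ∈ X then Y else ∅) ∪ (if some false ∈ X then Z else ∅) := by
    ext x
    simp only [Set.mem_iUnion, Set.mem_union]
    constructor
    · rintro ⟨a, ha, hx⟩; cases a <;> simp_all
    · rintro (hx | hx)
      · split_ifs at hx with h
        · exact ⟨true, h, by simpa⟩
        · simp at hx
      · split_ifs at hx with h
        · exact ⟨false, h, by simpa⟩
        · simp at hx
  rw [h2]
  simp only [h1]

open Classical in
theorem cond_cases {S : Type*} (X : Set (Option Bool)) (Y Z : Set (Option S)) :
    (some true ∉ X → ∀ Y' : Set (Option S), condMap X Y Z = condMap X Y' Z) ∧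
    condMap {some true} Y Z = Y ∧
    condMap {some true, some false} Y Z = sunion Y Z ∧
    condMap {some true, none} Y Z = (if Y = ∅ then ∅ else Y ∪ {none}) ∧
    condMap {some true, some false, none} Y Z =
      (if sunion Y Z = ∅ then ∅ else sunion Y Z ∪ {none}) := by
  refine ⟨?_, ?_, ?_, ?_, ?_⟩
  · intro h Y'
    rw [condMap_eq, condMap_eq]
    simp [h]
  · rw [condMap_eq]
    simp [Set.mem_singleton_iff]
    intro h; simp [h]
  · rw [condMap_eq, sunion]
    simp only [Set.mem_insert_iff, Set.mem_singleton_iff, reduceCtorEq, or_false, false_or]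
    simp only [or_comm]
    split_ifs with h <;> simp_all
  · rw [condMap_eq]
    simp only [Set.mem_insert_iff, Set.mem_singleton_iff, reduceCtorEq, or_false, false_or,
      true_and]
    split_ifs with h <;> simp_all
  · rw [condMap_eq, sunion]
    simp only [Set.mem_insert_iff, Set.mem_singleton_iff, reduceCtorEq, or_false, false_or,
      true_and]
    by_cases hY : Y = ∅ <;> by_cases hZ : Z = ∅ <;> simp_all
end

section
/- The conditional map is ω-continuous in its then-branch: fix X ∈ P⋆(Bool) and Z ∈ P⋆(S), let Y : ℕ → Set (Option S) be an ω-chain with each Y n ∈ P⋆(S), and let L be a least upper bound of (Y n) with respect to ⊑. Then lift (fun b => if b then L else Z) X is a least upper bound of the sequence (lift (fun b => if b then Y n else Z) X) with respect to ⊑. -/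
section Aux
variable {S : Type*}

lemma pleq_refl (A : Set (Option S)) : PLeq A A := Or.inl rfl

lemma empty_pleq {M : Set (Option S)} (h : PLeq (∅ : Set (Option S)) M) : M = ∅ := by
  rcases h with h | ⟨h, -⟩
  · exact h.symm
  · simp at h

lemma lift_empty_of {T : Type*} {f : T → Set (Option S)} {X : Set (Option T)}
    (h : ∃ a, some a ∈ X ∧ f a = ∅) : lift f X = ∅ := by
  unfold lift; rw [if_pos h]

lemma lift_of_not {T : Type*} {f : T → Set (Option S)} {X : Set (Option T)}
    (h : ¬ ∃ a, some a ∈ X ∧ f a = ∅) :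
    lift f X = {x | x = none ∧ none ∈ X} ∪ ⋃ (a : T) (_ : some a ∈ X), f a := by
  unfold lift; rw [if_neg h]

lemma cond_union {X : Set (Option Bool)} (hT : some true ∈ X) (W Z : Set (Option S)) :
    ⋃ (a : Bool) (_ : some a ∈ X), (if a then W else Z) = W ∪ ⋃ (_ : some false ∈ X), Z := by
  ext x
  simp only [Set.mem_iUnion, Set.mem_union, Bool.exists_bool, if_true, if_false,
    Bool.false_eq_true]
  constructor
  · rintro (⟨h, hx⟩ | ⟨h, hx⟩)
    · exact Or.inr ⟨h, hx⟩
    · exact Or.inl hx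
  · rintro (hx | ⟨h, hx⟩)
    · exact Or.inr ⟨hT, hx⟩
    · exact Or.inl ⟨h, hx⟩

lemma cond_union_notT {X : Set (Option Bool)} (hT : some true ∉ X) (W Z : Set (Option S)) :
    ⋃ (a : Bool) (_ : some a ∈ X), (if a then W else Z) = ⋃ (_ : some false ∈ X), Z := by
  ext x
  simp only [Set.mem_iUnion, Bool.exists_bool, if_true, if_false, Bool.false_eq_true]
  constructor
  · rintro (⟨h, hx⟩ | ⟨h, hx⟩)
    · exact ⟨h, hx⟩
    · exact absurd h hT
  · rintro ⟨h, hx⟩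
    exact Or.inl ⟨h, hx⟩

end Aux

theorem cond_continuous_then {S : Type*} (X : Set (Option Bool)) (hX : X ∈ Pstar Bool)
    (Z : Set (Option S)) (hZ : Z ∈ Pstar S)
    (Y : ℕ → Set (Option S)) (hmem : ∀ n, Y n ∈ Pstar S)
    (hchain : ∀ n, PLeq (Y n) (Y (n + 1)))
    (L : Set (Option S)) (hub : ∀ n, PLeq (Y n) L)
    (hlub : ∀ M : Set (Option S), (∀ n, PLeq (Y n) M) → PLeq L M) :
    (∀ n, PLeq (lift (fun b => if b then Y n else Z) X)
        (lift (fun b => if b then L else Z) X)) ∧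
      ∀ M : Set (Option S), (∀ n, PLeq (lift (fun b => if b then Y n else Z) X) M) →
        PLeq (lift (fun b => if b then L else Z) X) M := by
  classical
  by_cases hT : some true ∈ X
  · by_cases hFZ : some false ∈ X ∧ Z = ∅
    · -- error from the false branch: everything is ∅
      have hc : ∀ W : Set (Option S), lift (fun b => if b then W else Z) X = ∅ := fun W =>
        lift_empty_of ⟨false, hFZ.1, by simpa using hFZ.2⟩
      refine ⟨fun n => ?_, fun M hM => ?_⟩
      · rw [hc, hc]; exact pleq_refl _
      · rw [hc]
        have := hM 0
        rw [hc] at this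
        exact this
    · -- nondegenerate case
      have hcomp : ∀ W : Set (Option S), W ≠ ∅ →
          lift (fun b => if b then W else Z) X =
            ({x | x = none ∧ none ∈ X} ∪ W) ∪ ⋃ (_ : some false ∈ X), Z := by
        intro W hW
        rw [lift_of_not, cond_union hT, Set.union_assoc]
        rintro ⟨a, ha, hfa⟩
        cases a
        · exact hFZ ⟨ha, by simpa using hfa⟩
        · exact hW (by simpa using hfa)
      have hempty : ∀ W : Set (Option S), W = ∅ →
          lift (fun b => if b then W else Z) X = ∅ := fun W hW =>
        lift_empty_of ⟨true, hT, by simpa using hW⟩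
      by_cases hL : L = ∅
      · -- L is empty: the chain is eventually ∅
        have hne : ∃ n, Y n = ∅ := by
          by_contra h
          simp only [not_exists] at h
          have hnone : ∀ n, none ∈ Y n := by
            intro n
            rcases hub n with he | ⟨hn, -⟩
            · exact absurd (he.trans hL) (h n)
            · exact hn
          have hU : PLeq L (⋃ n, Y n) :=
            hlub _ (fun n => Or.inr ⟨hnone n, Or.inr (fun x hx => Set.mem_iUnion.2 ⟨n, hx.1⟩)⟩)
          rw [hL] at hU
          have hUe := empty_pleq hU
          have : none ∈ (⋃ n, Y n) := Set.mem_iUnion.2 ⟨0, hnone 0⟩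
          rw [hUe] at this
          exact this
        obtain ⟨n0, hn0⟩ := hne
        refine ⟨fun n => ?_, fun M hM => ?_⟩
        · rw [hempty L hL]
          by_cases hYn : Y n = ∅
          · rw [hempty _ hYn]; exact pleq_refl _
          · rcases hub n with he | ⟨hn, -⟩
            · exact absurd (he.trans hL) hYn
            · rw [hcomp _ hYn]
              exact Or.inr ⟨Set.mem_union_left _ (Set.mem_union_right _ hn), Or.inl rfl⟩
        · have := hM n0
          rw [hempty _ hn0] at this
          rw [hempty L hL, empty_pleq this]
          exact pleq_refl _
      · -- L nonempty: all Y n nonempty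
        have hYne : ∀ n, Y n ≠ ∅ := by
          intro n hn
          rcases hub n with he | ⟨hmem', -⟩
          · exact hL (he ▸ hn)
          · rw [hn] at hmem'; simp at hmem'
        refine ⟨fun n => ?_, fun M hM => ?_⟩
        · rw [hcomp _ (hYne n), hcomp _ hL]
          rcases hub n with he | ⟨hn, hs | hs⟩
          · rw [he]; exact pleq_refl _
          · exact absurd hs hL
          · refine Or.inr ⟨Set.mem_union_left _ (Set.mem_union_right _ hn), Or.inr ?_⟩
            rintro x ⟨hx, hxn⟩
            have hxne : x ≠ none := by simpa using hxn
            rcases hx with (hx | hx) | hx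
            · exact absurd hx.1 hxne
            · exact Set.mem_union_left _ (Set.mem_union_right _ (hs ⟨hx, hxn⟩))
            · exact Set.mem_union_right _ hx
        · by_cases hEx : ∃ n, L = Y n
          · obtain ⟨n, hn⟩ := hEx
            rw [hn]; exact hM n
          · push_neg at hEx
            have hsub : ∀ n, none ∈ Y n ∧ Y n \ {none} ⊆ L := by
              intro n
              rcases hub n with he | ⟨hn, hs | hs⟩
              · exact absurd he.symm (hEx n)
              · exact absurd hs hL
              · exact ⟨hn, hs⟩
            have hLU : L = ⋃ n, Y n := by
              have hU : PLeq L (⋃ n, Y n) :=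
                hlub _ (fun n =>
                  Or.inr ⟨(hsub n).1, Or.inr fun x hx => Set.mem_iUnion.2 ⟨n, hx.1⟩⟩)
              rcases hU with he | ⟨hnL, hs | hs⟩
              · exact he
              · exfalso
                have : none ∈ (⋃ n, Y n) := Set.mem_iUnion.2 ⟨0, (hsub 0).1⟩
                rw [hs] at this
                exact this
              · apply Set.Subset.antisymm
                · intro x hx
                  by_cases hxn : x = none
                  · subst hxn; exact Set.mem_iUnion.2 ⟨0, (hsub 0).1⟩
                  · exact hs ⟨hx, by simpa using hxn⟩
                · intro x hx
                  obtain ⟨n, hxn⟩ := Set.mem_iUnion.1 hx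
                  by_cases hxe : x = none
                  · subst hxe; exact hnL
                  · exact (hsub n).2 ⟨hxn, by simpa using hxe⟩
            rw [hcomp _ hL]
            refine Or.inr ⟨Set.mem_union_left _ (Set.mem_union_right _ ?_), ?_⟩
            · rw [hLU]; exact Set.mem_iUnion.2 ⟨0, (hsub 0).1⟩
            by_cases hM0 : M = ∅
            · exact Or.inl hM0
            refine Or.inr ?_
            rintro x ⟨hx, hxn⟩
            have hxne : x ≠ none := by simpa using hxn
            have hx' : ∃ n, x ∈ ({x | x = none ∧ none ∈ X} ∪ Y n) ∪
                ⋃ (_ : some false ∈ X), Z := by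
              rcases hx with (hx | hx) | hx
              · exact absurd hx.1 hxne
              · rw [hLU] at hx
                obtain ⟨n, hn⟩ := Set.mem_iUnion.1 hx
                exact ⟨n, Set.mem_union_left _ (Set.mem_union_right _ hn)⟩
              · exact ⟨0, Set.mem_union_right _ hx⟩
            obtain ⟨n, hxA⟩ := hx'
            have hMn := hM n
            rw [hcomp _ (hYne n)] at hMn
            rcases hMn with he | ⟨-, hs | hs⟩
            · rw [← he]; exact hxA
            · exact absurd hs hM0
            · exact hs ⟨hxA, hxn⟩
  · -- some true ∉ X : the lift does not depend on the then-branch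
    have hc : ∀ W W' : Set (Option S),
        lift (fun b => if b then W else Z) X = lift (fun b => if b then W' else Z) X := by
      have key : ∀ W : Set (Option S),
          lift (fun b => if b then W else Z) X =
            if some false ∈ X ∧ Z = ∅ then ∅
            else {x | x = none ∧ none ∈ X} ∪ ⋃ (_ : some false ∈ X), Z := by
        intro W
        by_cases h : some false ∈ X ∧ Z = ∅
        · rw [if_pos h]
          exact lift_empty_of ⟨false, h.1, by simpa using h.2⟩
        · rw [if_neg h, lift_of_not, cond_union_notT hT]
          rintro ⟨a, ha, hfa⟩
          cases a
          · exact h ⟨ha, by simpa using hfa⟩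
          · exact hT ha
      intro W W'
      rw [key W, key W']
    refine ⟨fun n => ?_, fun M hM => ?_⟩
    · rw [hc (Y n) L]; exact pleq_refl _
    · rw [hc L (Y 0)]
      exact hM 0
end

section
/- McCarthy's ambiguous choice on the powerdomain is not monotone with respect to ⊑: defining amb X Y := X ⊎ Y if none ∈ X ∩ Y, and (X ⊎ Y) \ {none} otherwise, one has {none} ⊑ {some true} in Set (Option Bool), yet ¬(amb {none} {some false} ⊑ amb {some true} {some false}); concretely, amb {none} {some false} = {some false}, amb {some true} {some false} = {some true, some false}, and ¬({some false} ⊑ {some true, some false}). -/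
open Classical in
/-- McCarthy's ambiguous choice on the powerdomain. -/
noncomputable def amb (X Y : Set (Option Bool)) : Set (Option Bool) :=
  if none ∈ X ∩ Y then sunion X Y else sunion X Y \ {none}

lemma amb1 : amb {none} {some false} = {some false} := by
  rw [amb, if_neg (by simp), sunion, if_neg (by simp [Set.singleton_nonempty,
    ← Set.nonempty_iff_ne_empty])]
  ext x; cases x <;> simp

lemma amb2 : amb {some true} {some false} = {some true, some false} := by
  rw [amb, if_neg (by simp), sunion, if_neg (by simp [← Set.nonempty_iff_ne_empty])]
  ext x; cases x <;> simp

lemma notP : ¬ PLeq ({some false} : Set (Option Bool)) {some true, some false} := by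
  rintro (h | ⟨h, _⟩)
  · have : (some true : Option Bool) ∈ ({some false} : Set (Option Bool)) := by
      rw [h]; left; rfl
    simp at this
  · simp at h

theorem amb_not_monotone :
    PLeq ({none} : Set (Option Bool)) {some true} ∧
    ¬ PLeq (amb {none} {some false}) (amb {some true} {some false}) ∧
    amb {none} {some false} = {some false} ∧
    amb {some true} {some false} = {some true, some false} ∧
    ¬ PLeq ({some false} : Set (Option Bool)) {some true, some false} := by
  refine ⟨Or.inr ⟨rfl, Or.inr ?_⟩, ?_, amb1, amb2, notP⟩
  · simp
  · rw [amb1, amb2]; exact notP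
end
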